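/- Let R be a ring, M a left R-module, and N a nonzero submodule of M that is not singular, i.e. there exists a nonzero x ∈ N whose annihilator left ideal in R is not essential. Then N contains a nonzero submodule that is isomorphic (as a left R-module) to a nonzero left ideal of R. -/
import Mathlib


/-- The annihilator of an element `m` of `M`: the left ideal `{r : R | r • m = 0}`. -/
def annIdeal (R : Type*) [Ring R] (M : Type*) [AddCommGroup M] [Module R M] (m : M) :
    Ideal R :=
  LinearMap.ker (LinearMap.toSpanSingleton R M m)

/-- A left ideal `J` of `R` is essential if it meets every nonzero left ideal nontrivially. -/
def EssIdeal (R : Type*) [Ring R] (J : Ideal R) : Prop :=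
  ∀ I : Ideal R, I ≠ ⊥ → J ⊓ I ≠ ⊥

/-- `M` is torsionless if it is cogenerated by `R`: every nonzero element of `M` is detected
by some `R`-linear map `M → R`. -/
def Torsionless (R : Type*) [Ring R] (M : Type*) [AddCommGroup M] [Module R M] : Prop :=
  ∀ m : M, m ≠ 0 → ∃ f : M →ₗ[R] R, f m ≠ 0

theorem nonsingular_contains_copy_of_left_ideal (R : Type*) [Ring R] (M : Type*)
    [AddCommGroup M] [Module R M] (N : Submodule R M) (hN : N ≠ ⊥)
    (h : ∃ x ∈ N, x ≠ 0 ∧ ¬ EssIdeal R (annIdeal R M x)) :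
    ∃ K : Submodule R M, K ≠ ⊥ ∧ K ≤ N ∧
      ∃ I : Ideal R, I ≠ ⊥ ∧ Nonempty (K ≃ₗ[R] I) := by
  obtain ⟨x, hxN, hx0, hess⟩ := h
  simp only [EssIdeal, not_forall] at hess
  obtain ⟨I, hI0, hinf⟩ := hess
  push_neg at hinf
  set f := LinearMap.toSpanSingleton R M x with hf
  refine ⟨Submodule.map f I, ?_, ?_, I, hI0, ?_⟩
  · intro hK
    apply hI0
    rw [eq_bot_iff] at hK ⊢
    intro r hr
    have hfr : f r = 0 := by
      have := hK (Submodule.mem_map_of_mem hr)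
      simpa using this
    have : r ∈ annIdeal R M x ⊓ I := ⟨hfr, hr⟩
    rw [hinf] at this
    exact this
  · rintro y ⟨r, hr, rfl⟩
    exact N.smul_mem r hxN
  · have hinj : Function.Injective (f.domRestrict I) := by
      rw [← LinearMap.ker_eq_bot, eq_bot_iff]
      rintro ⟨r, hr⟩ hker
      have hfr : f r = 0 := hker
      have : r ∈ annIdeal R M x ⊓ I := ⟨hfr, hr⟩
      rw [hinf] at this
      exact Subtype.ext this
    have e1 := LinearEquiv.ofInjective (f.domRestrict I) hinj
    have hrange : LinearMap.range (f.domRestrict I) = Submodule.map f I := by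
      ext y
      simp [LinearMap.mem_range, Submodule.mem_map]
    exact ⟨(LinearEquiv.ofEq _ _ hrange).symm.trans e1.symm⟩
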